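/- In the symmetric reduced setting, solutions of the single generalized eigenproblem make the loss vanish: suppose 𝒮 is symmetric and β ∈ ℝⁿ, λ ∈ ℝ satisfy 𝒮β = λ𝒢β and 𝒜β = λ²𝒢β. Then J(β,λ) = 0, and hence ⟨aᵢ,β⟩ = λ⟨bᵢ,β⟩ at every collocation point i = 1,…,N. -/
import Mathlib


open Matrix BigOperators

/-- The matrix 𝒜 = Σᵢ aᵢaᵢᵀ. -/
def matA {N n : ℕ} (a : Fin N → Fin n → ℝ) : Matrix (Fin n) (Fin n) ℝ :=
  ∑ i, vecMulVec (a i) (a i)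

/-- The matrix 𝒮 = Σᵢ aᵢbᵢᵀ. -/
def matS {N n : ℕ} (a b : Fin N → Fin n → ℝ) : Matrix (Fin n) (Fin n) ℝ :=
  ∑ i, vecMulVec (a i) (b i)

/-- The matrix 𝒫 = 𝒮 + 𝒮ᵀ. -/
def matP {N n : ℕ} (a b : Fin N → Fin n → ℝ) : Matrix (Fin n) (Fin n) ℝ :=
  matS a b + (matS a b)ᵀ

/-- The matrix 𝒢 = Σᵢ bᵢbᵢᵀ. -/
def matG {N n : ℕ} (b : Fin N → Fin n → ℝ) : Matrix (Fin n) (Fin n) ℝ :=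
  ∑ i, vecMulVec (b i) (b i)

/-- The Eig-PIELM interior least-squares loss J(β,λ) = ½ Σᵢ (⟨aᵢ,β⟩ − λ⟨bᵢ,β⟩)². -/
noncomputable def eigJ {N n : ℕ} (a b : Fin N → Fin n → ℝ) (β : Fin n → ℝ) (lam : ℝ) : ℝ :=
  (1 / 2) * ∑ i, (a i ⬝ᵥ β - lam * (b i ⬝ᵥ β)) ^ 2

lemma sum_mulVec' {N n : ℕ} (M : Fin N → Matrix (Fin n) (Fin n) ℝ) (β : Fin n → ℝ) :
    (∑ i, M i).mulVec β = ∑ i, (M i).mulVec β := by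
  funext j
  simp only [mulVec, dotProduct, Matrix.sum_apply, Finset.sum_apply, Finset.sum_mul]
  exact Finset.sum_comm

lemma dot_sum' {N n : ℕ} (v : Fin N → Fin n → ℝ) (β : Fin n → ℝ) :
    β ⬝ᵥ (∑ i, v i) = ∑ i, β ⬝ᵥ v i := by
  simp only [dotProduct, Finset.sum_apply, Finset.mul_sum]
  exact Finset.sum_comm

lemma vecMulVec_mulVec' {n : ℕ} (c d β : Fin n → ℝ) :
    (vecMulVec c d).mulVec β = (d ⬝ᵥ β) • c := by
  funext j
  simp [mulVec, dotProduct, vecMulVec_apply, Finset.mul_sum, mul_assoc, mul_comm, mul_left_comm]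

lemma quad_form_sum {N n : ℕ} (c d : Fin N → Fin n → ℝ) (β : Fin n → ℝ) :
    β ⬝ᵥ (∑ i, vecMulVec (c i) (d i)).mulVec β = ∑ i, (c i ⬝ᵥ β) * (d i ⬝ᵥ β) := by
  rw [sum_mulVec', dot_sum']
  refine Finset.sum_congr rfl fun i _ => ?_
  rw [vecMulVec_mulVec', dotProduct_smul, smul_eq_mul, dotProduct_comm β (c i)]
  ring

/-- if 𝒮 is symmetric and 𝒮β = λ𝒢β, 𝒜β = λ²𝒢β, then J(β,λ) = 0
    and hence ⟨aᵢ,β⟩ = λ⟨bᵢ,β⟩ at every collocation point. -/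
theorem eig_pielm_reduced_solutions_kill_loss {N n : ℕ} (a b : Fin N → Fin n → ℝ)
    (hS : (matS a b)ᵀ = matS a b) (β : Fin n → ℝ) (lam : ℝ)
    (h1 : (matS a b).mulVec β = lam • (matG b).mulVec β)
    (h2 : (matA a).mulVec β = lam ^ 2 • (matG b).mulVec β) :
    eigJ a b β lam = 0 ∧ ∀ i : Fin N, a i ⬝ᵥ β = lam * (b i ⬝ᵥ β) := by
  have hG : β ⬝ᵥ (matG b).mulVec β = ∑ i, (b i ⬝ᵥ β) * (b i ⬝ᵥ β) :=
    quad_form_sum b b β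
  have hScross : ∑ i, (a i ⬝ᵥ β) * (b i ⬝ᵥ β)
      = lam * ∑ i, (b i ⬝ᵥ β) * (b i ⬝ᵥ β) := by
    have := congrArg (fun v => β ⬝ᵥ v) h1
    simpa [quad_form_sum, hG, dotProduct_smul, smul_eq_mul, matS, matG] using this
  have hAq : ∑ i, (a i ⬝ᵥ β) * (a i ⬝ᵥ β)
      = lam ^ 2 * ∑ i, (b i ⬝ᵥ β) * (b i ⬝ᵥ β) := by
    have := congrArg (fun v => β ⬝ᵥ v) h2
    simpa [quad_form_sum, hG, dotProduct_smul, smul_eq_mul, matA, matG] using this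
  have hsum : ∑ i, (a i ⬝ᵥ β - lam * (b i ⬝ᵥ β)) ^ 2 = 0 := by
    have : ∑ i, (a i ⬝ᵥ β - lam * (b i ⬝ᵥ β)) ^ 2
        = (∑ i, (a i ⬝ᵥ β) * (a i ⬝ᵥ β))
          - 2 * lam * (∑ i, (a i ⬝ᵥ β) * (b i ⬝ᵥ β))
          + lam ^ 2 * (∑ i, (b i ⬝ᵥ β) * (b i ⬝ᵥ β)) := by
      rw [Finset.mul_sum, Finset.mul_sum, ← Finset.sum_sub_distrib, ← Finset.sum_add_distrib]
      refine Finset.sum_congr rfl fun i _ => by ring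
    rw [this, hScross, hAq]; ring
  have hzero : ∀ i : Fin N, (a i ⬝ᵥ β - lam * (b i ⬝ᵥ β)) ^ 2 = 0 := by
    intro i
    have := (Finset.sum_eq_zero_iff_of_nonneg (fun i _ => sq_nonneg _)).mp hsum i
      (Finset.mem_univ i)
    exact this
  constructor
  · simp [eigJ, hsum]
  · intro i
    have := pow_eq_zero_iff (n := 2) (by norm_num) |>.mp (hzero i)
    linarith [sub_eq_zero.mp this]
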